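/- arXiv:2310.15924 — 3 statements merged into one kernel-verified Lean document; each statement's English description precedes it below -/
import Mathlib

section
/- Let I = {1,…,N} be a finite set of players. For each i, let U_i ⊆ ℝ^{n_i} be a nonempty, compact, convex set, and let U = U_1 × ⋯ × U_N. For each i, let J_i : ℝ^{n_1} × ⋯ × ℝ^{n_N} → ℝ be such that for every fixed u_{-i}, the map u_i ↦ J_i(u_i, u_{-i}) is convex and differentiable, and let F_i(u) denote the gradient of this map at u_i. Assume the pseudo-gradient F(u) = (F_1(u),…,F_N(u)) is μ-cocoercive on U for some μ > 0, and let gains γ_i ∈ (0, 2μ) for all i. Then for any initialization u^0 ∈ U, the sequence generated by the iteration u_i^{k+1} = proj_{U_i}(u_i^k − γ_i F_i(u^k)) for all i converges to some u* ∈ U which is a Nash equilibrium of the game, i.e., for every i, J_i(u_i*, u_{-i}*) ≤ J_i(u_i, u_{-i}*) for all u_i ∈ U_i. -/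
/-!
In the norm `‖u‖_γ² = ∑ i, (γ i)⁻¹ * ‖u i‖²` the step-size matrix becomes a scalar: `u ↦ γ • F u` is
`μ / max γ`-cocoercive with `μ / max γ > 1 / 2`, and the product of the projections is firmly
nonexpansive. Hence the iteration map `T` is averaged,
`‖T u - T v‖² + κ ‖(u - v) - (T u - T v)‖² ≤ ‖u - v‖²` for some `κ > 0`.
An averaged self-map of a compact convex set has a fixed point (a limit of fixed points of the
contractions `(1 - t) c + t T`), its iterates are Fejér monotone towards the fixed points and
asymptotically regular, so they converge to a fixed point. A fixed point of the projected
pseudo-gradient step satisfies each player's variational inequality, which by convexity is the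
Nash condition.
-/

open Filter Topology RealInnerProductSpace Set Function

/-- For `κ = (1 - α) / α` this says that `T` is `α`-averaged on `K`; `κ = 1` is firm
nonexpansiveness. -/
def AveragedOn {V : Type*} [NormedAddCommGroup V] (κ : ℝ) (T : V → V) (K : Set V) : Prop :=
  ∀ x ∈ K, ∀ y ∈ K, ‖T x - T y‖ ^ 2 + κ * ‖(x - y) - (T x - T y)‖ ^ 2 ≤ ‖x - y‖ ^ 2

theorem AveragedOn.lipschitzOnWith_one {V : Type*} [NormedAddCommGroup V] {κ : ℝ} {T : V → V}
    {K : Set V} (hT : AveragedOn κ T K) (hκ : 0 ≤ κ) : LipschitzOnWith 1 T K := by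
  refine LipschitzOnWith.mk_one fun x hx y hy => ?_
  rw [dist_eq_norm, dist_eq_norm,
    ← pow_le_pow_iff_left₀ (norm_nonneg _) (norm_nonneg _) two_ne_zero]
  nlinarith [hT x hx y hy, sq_nonneg ‖(x - y) - (T x - T y)‖]

theorem tendsto_atTop_zero_of_succ_add_le {a b : ℕ → ℝ} (ha : ∀ k, 0 ≤ a k) (hb : ∀ k, 0 ≤ b k)
    (h : ∀ k, a (k + 1) + b k ≤ a k) : Tendsto b atTop (𝓝 0) := by
  have hsum : ∀ n, ∑ k ∈ Finset.range n, b k + a n ≤ a 0 := by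
    intro n
    induction n with
    | zero => simp
    | succ n ih => rw [Finset.sum_range_succ]; linarith [h n]
  exact (summable_of_sum_range_le hb fun n => by linarith [hsum n, ha n]).tendsto_atTop_zero

theorem IsCompact.tendsto_iterate_of_forall_dist_le {X : Type*} [MetricSpace X] {K : Set X}
    (hK : IsCompact K) {T : X → X} (hmaps : MapsTo T K K) (hcont : ContinuousOn T K)
    (hfejer : ∀ p ∈ K, IsFixedPt T p → ∀ x ∈ K, dist (T x) p ≤ dist x p) {x₀ : X} (hx₀ : x₀ ∈ K)
    (hreg : Tendsto (fun k => dist (T^[k] x₀) (T^[k + 1] x₀)) atTop (𝓝 0)) :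
    ∃ p ∈ K, IsFixedPt T p ∧ Tendsto (fun k => T^[k] x₀) atTop (𝓝 p) := by
  have hmem : ∀ k, T^[k] x₀ ∈ K := fun k => hmaps.iterate k hx₀
  obtain ⟨p, hp, ψ, hψ, hlim⟩ := hK.tendsto_subseq hmem
  have hlim_succ : Tendsto (fun k => T (T^[ψ k] x₀)) atTop (𝓝 p) := by
    refine tendsto_of_tendsto_of_dist hlim ?_
    simpa only [comp_def, iterate_succ_apply'] using hreg.comp hψ.tendsto_atTop
  have hfix : IsFixedPt T p :=
    tendsto_nhds_unique ((hcont p hp).tendsto.comp (tendsto_nhdsWithin_iff.2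
      ⟨hlim, Eventually.of_forall fun k => hmem (ψ k)⟩)) hlim_succ
  refine ⟨p, hp, hfix, tendsto_iff_dist_tendsto_zero.2 ?_⟩
  set d := fun k => dist (T^[k] x₀) p
  have hanti : Antitone d := antitone_nat_of_succ_le fun k => by
    simpa only [d, iterate_succ_apply'] using hfejer p hp hfix _ (hmem k)
  have hbdd : BddBelow (range d) := ⟨0, by rintro _ ⟨k, rfl⟩; exact dist_nonneg⟩
  have hinf := tendsto_atTop_ciInf hanti hbdd
  have hsub : Tendsto (d ∘ ψ) atTop (𝓝 0) := tendsto_iff_dist_tendsto_zero.1 hlim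
  rwa [tendsto_nhds_unique (hinf.comp hψ.tendsto_atTop) hsub] at hinf

section NormedSpace

variable {V : Type*} [NormedAddCommGroup V] [NormedSpace ℝ V]

theorem Convex.exists_eq_add_smul_of_lipschitzOnWith_one {K : Set V} (hK : Convex ℝ K)
    (hK' : IsComplete K) {T : V → V} (hmaps : MapsTo T K K) (hT : LipschitzOnWith 1 T K)
    {c : V} (hc : c ∈ K) {t : ℝ} (ht₀ : 0 ≤ t) (ht₁ : t < 1) :
    ∃ z ∈ K, z = (1 - t) • c + t • T z := by
  have : CompleteSpace K := hK'.completeSpace_coe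
  have : Nonempty K := ⟨⟨c, hc⟩⟩
  let S : K → K := fun z => ⟨(1 - t) • c + t • T z, hK hc (hmaps z.2) (by linarith) ht₀ (by ring)⟩
  have hS : ContractingWith ⟨t, ht₀⟩ S := by
    refine ⟨ht₁, LipschitzWith.of_dist_le_mul fun x y => ?_⟩
    rw [Subtype.dist_eq, dist_add_left, dist_smul₀, Real.norm_of_nonneg ht₀]
    have := hT.dist_le_mul x x.2 y y.2
    rw [NNReal.coe_one, one_mul] at this
    exact mul_le_mul_of_nonneg_left this ht₀
  set z := hS.fixedPoint S
  exact ⟨z, z.2, congrArg Subtype.val (hS.fixedPoint_isFixedPt (f := S)).symm⟩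

theorem IsCompact.exists_isFixedPt_of_lipschitzOnWith_one {K : Set V} (hK : IsCompact K)
    (hconv : Convex ℝ K) (hne : K.Nonempty) {T : V → V} (hmaps : MapsTo T K K)
    (hT : LipschitzOnWith 1 T K) : ∃ p ∈ K, IsFixedPt T p := by
  obtain ⟨c, hc⟩ := hne
  have happrox : ∀ t ∈ Ioo (0 : ℝ) 1, ∃ z ∈ K, ‖z - T z‖ ≤ (1 - t) * Metric.diam K := by
    rintro t ⟨ht₀, ht₁⟩
    obtain ⟨z, hz, hzeq⟩ :=
      hconv.exists_eq_add_smul_of_lipschitzOnWith_one hK.isComplete hmaps hT hc ht₀.le ht₁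
    have : z - T z = (1 - t) • (c - T z) := by
      nth_rewrite 1 [hzeq]
      module
    refine ⟨z, hz, ?_⟩
    rw [this, norm_smul, Real.norm_of_nonneg (by linarith), ← dist_eq_norm]
    exact mul_le_mul_of_nonneg_left
      (Metric.dist_le_diam_of_mem hK.isBounded hc (hmaps hz)) (by linarith)
  obtain ⟨p, hp, hmin⟩ := hK.exists_isMinOn ⟨c, hc⟩ (continuousOn_id.sub hT.continuousOn).norm
  refine ⟨p, hp, (sub_eq_zero.1 (norm_le_zero_iff.1 ?_)).symm⟩
  have hlim : Tendsto (fun t : ℝ => (1 - t) * Metric.diam K) (𝓝[<] 1) (𝓝 0) := by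
    have : Tendsto (fun t : ℝ => (1 - t) * Metric.diam K) (𝓝 1) (𝓝 ((1 - 1) * Metric.diam K)) :=
      Continuous.tendsto (by fun_prop) 1
    rw [sub_self, zero_mul] at this
    exact this.mono_left nhdsWithin_le_nhds
  refine ge_of_tendsto hlim ?_
  filter_upwards [Ioo_mem_nhdsLT (zero_lt_one' ℝ)] with t ht
  obtain ⟨z, hz, hzt⟩ := happrox t ht
  exact (hmin hz).trans hzt

theorem AveragedOn.tendsto_iterate {κ : ℝ} {T : V → V} {K : Set V} (hT : AveragedOn κ T K)
    (hκ : 0 < κ) (hK : IsCompact K) (hconv : Convex ℝ K) (hmaps : MapsTo T K K) {x₀ : V}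
    (hx₀ : x₀ ∈ K) : ∃ p ∈ K, IsFixedPt T p ∧ Tendsto (fun k => T^[k] x₀) atTop (𝓝 p) := by
  have hlip := hT.lipschitzOnWith_one hκ.le
  obtain ⟨q, hq, hqfix⟩ := hK.exists_isFixedPt_of_lipschitzOnWith_one hconv ⟨x₀, hx₀⟩ hmaps hlip
  have hfejer : ∀ p ∈ K, IsFixedPt T p → ∀ x ∈ K, dist (T x) p ≤ dist x p := by
    intro p hp hpfix x hx
    simpa [hpfix.eq] using hlip.dist_le_mul x hx p hp
  have hdesc : ∀ x ∈ K, ‖T x - q‖ ^ 2 + κ * ‖x - T x‖ ^ 2 ≤ ‖x - q‖ ^ 2 := by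
    intro x hx
    simpa [hqfix.eq] using hT x hx q hq
  refine hK.tendsto_iterate_of_forall_dist_le hmaps hlip.continuousOn hfejer hx₀ ?_
  have hsq := tendsto_atTop_zero_of_succ_add_le (a := fun k => ‖T^[k] x₀ - q‖ ^ 2)
    (b := fun k => κ * ‖T^[k] x₀ - T^[k + 1] x₀‖ ^ 2) (fun k => sq_nonneg _)
    (fun k => by positivity) fun k => by
      simpa only [iterate_succ_apply'] using hdesc _ (hmaps.iterate k hx₀)
  have := (hsq.const_mul κ⁻¹).sqrt
  simpa [dist_eq_norm, ← mul_assoc, hκ.ne', Real.sqrt_sq] using this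

theorem ContinuousLinearEquiv.tendsto_iterate_of_averagedOn_conj {W : Type*}
    [NormedAddCommGroup W] [NormedSpace ℝ W] (e : V ≃L[ℝ] W) {κ : ℝ} {T : V → V} {K : Set V}
    (hT : AveragedOn κ (e ∘ T ∘ e.symm) (e '' K)) (hκ : 0 < κ) (hK : IsCompact K)
    (hconv : Convex ℝ K) (hmaps : MapsTo T K K) {x₀ : V} (hx₀ : x₀ ∈ K) :
    ∃ p ∈ K, IsFixedPt T p ∧ Tendsto (fun k => T^[k] x₀) atTop (𝓝 p) := by
  have hsemi : Semiconj e T (e ∘ T ∘ e.symm) := fun x => by simp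
  have hmaps' : MapsTo (e ∘ T ∘ e.symm) (e '' K) (e '' K) := by
    rintro _ ⟨x, hx, rfl⟩
    exact ⟨T x, hmaps hx, by simp⟩
  obtain ⟨_, ⟨p, hp, rfl⟩, hfix, hlim⟩ := hT.tendsto_iterate hκ (hK.image e.continuous)
    (hconv.linear_image (e : V →ₗ[ℝ] W)) hmaps' (mem_image_of_mem e hx₀)
  refine ⟨p, hp, e.injective (by simpa using hfix.eq), ?_⟩
  have := (e.symm.continuous.tendsto (e p)).comp hlim
  rw [e.symm_apply_apply] at this
  refine this.congr fun k => ?_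
  rw [comp_apply, ← hsemi.iterate_right k x₀, e.symm_apply_apply]

end NormedSpace

section InnerProductSpace

variable {H : Type*} [NormedAddCommGroup H] [InnerProductSpace ℝ H]

def CocoerciveOn (β : ℝ) (G : H → H) (K : Set H) : Prop :=
  ∀ x ∈ K, ∀ y ∈ K, β * ‖G x - G y‖ ^ 2 ≤ ⟪G x - G y, x - y⟫

theorem real_inner_sub_le_zero_of_forall_norm_sub_le {K : Set H} (hK : Convex ℝ K) {x p z : H}
    (hp : p ∈ K) (hmin : ∀ w ∈ K, ‖x - p‖ ≤ ‖x - w‖) (hz : z ∈ K) : ⟪x - p, z - p⟫ ≤ 0 := by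
  have : Nonempty K := ⟨⟨z, hz⟩⟩
  refine (norm_eq_iInf_iff_real_inner_le_zero hK hp).mp ?_ z hz
  exact le_antisymm (le_ciInf fun w => hmin w w.2)
    (ciInf_le ⟨0, by rintro r ⟨w, rfl⟩; positivity⟩ (⟨p, hp⟩ : K))

theorem averagedOn_one_of_forall_norm_sub_le {K : Set H} (hK : Convex ℝ K) {P : H → H}
    (hP : ∀ x, P x ∈ K ∧ ∀ z ∈ K, ‖x - P x‖ ≤ ‖x - z‖) : AveragedOn 1 P univ := by
  intro x _ y _
  have hx := real_inner_sub_le_zero_of_forall_norm_sub_le hK (hP x).1 (hP x).2 (hP y).1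
  have hy := real_inner_sub_le_zero_of_forall_norm_sub_le hK (hP y).1 (hP y).2 (hP x).1
  have hfirm : 0 ≤ ⟪(x - y) - (P x - P y), P x - P y⟫ := by
    simp only [inner_sub_left, inner_sub_right, real_inner_comm (P x) (P y)] at hx hy ⊢
    linarith
  have hsplit := norm_add_sq_real (P x - P y) ((x - y) - (P x - P y))
  rw [add_sub_cancel, real_inner_comm] at hsplit
  linarith

theorem AveragedOn.comp_sub_of_cocoerciveOn {P G : H → H} {K : Set H} {β : ℝ}
    (hP : AveragedOn 1 P univ) (hG : CocoerciveOn β G K) (hβ : 1 / 2 < β) :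
    ∃ κ > 0, AveragedOn κ (fun x => P (x - G x)) K := by
  set m := min 1 (2 * β - 1)
  have hm : 0 < m := lt_min one_pos (by linarith)
  refine ⟨m / 2, by positivity, fun x hx y hy => ?_⟩
  set g := G x - G y
  set t := P (x - G x) - P (y - G y)
  set e := (x - y - g) - t
  have hfirm : ‖t‖ ^ 2 + ‖e‖ ^ 2 ≤ ‖x - y - g‖ ^ 2 := by
    have hab : x - G x - (y - G y) = x - y - g := sub_sub_sub_comm _ _ _ _
    have h := hP (x - G x) trivial (y - G y) trivial
    rw [one_mul, hab] at h
    exact h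
  have hexpand : ‖x - y - g‖ ^ 2 = ‖x - y‖ ^ 2 - 2 * ⟪g, x - y⟫ + ‖g‖ ^ 2 := by
    rw [norm_sub_sq_real, real_inner_comm]
  have hres : ‖(x - y) - t‖ ^ 2 ≤ 2 * ‖e‖ ^ 2 + 2 * ‖g‖ ^ 2 := by
    have : (x - y) - t = e + g := by simp only [e]; abel
    rw [this]
    nlinarith [parallelogram_law_with_norm ℝ e g, sq_nonneg ‖e - g‖]
  have he : m * ‖e‖ ^ 2 ≤ ‖e‖ ^ 2 := by
    nlinarith [min_le_left 1 (2 * β - 1), sq_nonneg ‖e‖]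
  have hg : m * ‖g‖ ^ 2 ≤ (2 * β - 1) * ‖g‖ ^ 2 := by
    nlinarith [min_le_right 1 (2 * β - 1), sq_nonneg ‖g‖]
  nlinarith [hG x hx y hy]

theorem ConvexOn.inner_sub_le_sub_of_hasGradientAt [CompleteSpace H] {s : Set H} {g : H → ℝ}
    (hg : ConvexOn ℝ s g) {x v f : H} (hx : x ∈ s) (hv : v ∈ s) (hf : HasGradientAt g f x) :
    ⟪f, v - x⟫ ≤ g v - g x := by
  let ℓ : ℝ →ᵃ[ℝ] H := AffineMap.lineMap x v
  have hline : ConvexOn ℝ (ℓ ⁻¹' s) (g ∘ ℓ) := hg.comp_affineMap ℓ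
  have hderiv : HasDerivAt (g ∘ ℓ) ⟪f, v - x⟫ 0 := by
    have hf' : HasFDerivAt g (InnerProductSpace.toDual ℝ H f) (ℓ 0) := by
      simpa [ℓ] using hf.hasFDerivAt
    simpa using hf'.comp_hasDerivAt (0 : ℝ) AffineMap.hasDerivAt_lineMap
  have := hline.le_slope_of_hasDerivAt (by simpa [ℓ] using hx) (by simpa [ℓ] using hv) one_pos
    hderiv
  simpa [slope_def_field, ℓ] using this

theorem isMinOn_of_proj_sub_smul_eq_self [CompleteSpace H] {K : Set H} (hK : Convex ℝ K)
    {P : H → H} (hP : ∀ x, P x ∈ K ∧ ∀ z ∈ K, ‖x - P x‖ ≤ ‖x - z‖) {g : H → ℝ}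
    (hg : ConvexOn ℝ K g) {x f : H} (hf : HasGradientAt g f x) {γ : ℝ} (hγ : 0 < γ)
    (hfix : P (x - γ • f) = x) : IsMinOn g K x := by
  intro v hv
  have hx : x ∈ K := hfix ▸ (hP _).1
  have hvi := real_inner_sub_le_zero_of_forall_norm_sub_le hK (hP (x - γ • f)).1 (hP _).2 hv
  rw [hfix, sub_sub_cancel_left, inner_neg_left, real_inner_smul_left] at hvi
  have hgrad := hg.inner_sub_le_sub_of_hasGradientAt hx hv hf
  have : 0 ≤ ⟪f, v - x⟫ := (mul_nonneg_iff_of_pos_left hγ).1 (by linarith)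
  show g x ≤ g v
  linarith

end InnerProductSpace

theorem exists_ge_lt_forall_le {ι α : Type*} [Fintype ι] [LinearOrder α] {f : ι → α} {a b : α}
    (hab : a < b) (hf : ∀ i, f i < b) : ∃ c, a ≤ c ∧ c < b ∧ ∀ i, f i ≤ c := by
  classical
  let s := insert a (Finset.univ.image f)
  have hs : s.Nonempty := Finset.insert_nonempty _ _
  refine ⟨s.max' hs, s.le_max' _ (Finset.mem_insert_self _ _), ?_, fun i => s.le_max' _ ?_⟩
  · simpa [s, Finset.max'_lt_iff, hab] using hf
  · exact Finset.mem_insert_of_mem (Finset.mem_image_of_mem _ (Finset.mem_univ i))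

section Weighted

variable {ι : Type*} [Fintype ι] {E : ι → Type*} [∀ i, NormedAddCommGroup (E i)]
  [∀ i, InnerProductSpace ℝ (E i)] {γ : ι → ℝ}

/-- The rescaling `u ↦ ((γ i) ^ (-1/2) • u i)ᵢ` into `ℓ²`. -/
noncomputable def weightedEquiv (γ : ι → ℝ) (hγ : ∀ i, 0 < γ i) : (∀ i, E i) ≃L[ℝ] PiLp 2 E :=
  (ContinuousLinearEquiv.piCongrRight fun i => ContinuousLinearEquiv.smulLeft
    (Units.mk0 (√(γ i))⁻¹ (inv_pos.2 (Real.sqrt_pos.2 (hγ i))).ne')).trans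
    (PiLp.continuousLinearEquiv 2 ℝ E).symm

theorem inner_weightedEquiv (hγ : ∀ i, 0 < γ i) (u v : ∀ i, E i) :
    ⟪weightedEquiv γ hγ u, weightedEquiv γ hγ v⟫ = ∑ i, (γ i)⁻¹ * ⟪u i, v i⟫ := by
  simp only [weightedEquiv, PiLp.inner_apply]
  refine Finset.sum_congr rfl fun i _ => ?_
  simp [real_inner_smul_left, real_inner_smul_right, ← mul_assoc, ← mul_inv,
    Real.mul_self_sqrt (hγ i).le]

theorem norm_weightedEquiv_sq (hγ : ∀ i, 0 < γ i) (u : ∀ i, E i) :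
    ‖weightedEquiv γ hγ u‖ ^ 2 = ∑ i, (γ i)⁻¹ * ‖u i‖ ^ 2 := by
  simp only [← real_inner_self_eq_norm_sq, inner_weightedEquiv]

theorem averagedOn_weightedEquiv_conj (hγ : ∀ i, 0 < γ i) {κ : ℝ} {P : ∀ i, E i → E i}
    (hP : ∀ i, AveragedOn κ (P i) univ) :
    AveragedOn κ (fun x => weightedEquiv γ hγ fun i => P i ((weightedEquiv γ hγ).symm x i))
      univ := by
  intro x _ y _
  obtain ⟨u, rfl⟩ := (weightedEquiv γ hγ).surjective x
  obtain ⟨v, rfl⟩ := (weightedEquiv γ hγ).surjective y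
  simp only [ContinuousLinearEquiv.symm_apply_apply, ← map_sub, norm_weightedEquiv_sq,
    Pi.sub_apply, Finset.mul_sum, ← Finset.sum_add_distrib]
  refine Finset.sum_le_sum fun i _ => ?_
  have := mul_le_mul_of_nonneg_left (hP i (u i) trivial (v i) trivial) (inv_nonneg.2 (hγ i).le)
  linarith

theorem cocoerciveOn_weightedEquiv_conj (hγ : ∀ i, 0 < γ i) {F : ∀ i, (∀ j, E j) → E i}
    {K : Set (∀ i, E i)} {μ c : ℝ} (hμ : 0 ≤ μ) (hc : 0 < c) (hγc : ∀ i, γ i ≤ c)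
    (hF : ∀ u ∈ K, ∀ u' ∈ K,
      ∑ i, ⟪F i u - F i u', u i - u' i⟫ ≥ μ * ∑ i, ‖F i u - F i u'‖ ^ 2) :
    CocoerciveOn (μ / c)
      (fun x => weightedEquiv γ hγ fun i => γ i • F i ((weightedEquiv γ hγ).symm x))
      (weightedEquiv γ hγ '' K) := by
  rintro _ ⟨u, hu, rfl⟩ _ ⟨u', hu', rfl⟩
  simp only [ContinuousLinearEquiv.symm_apply_apply, ← map_sub, norm_weightedEquiv_sq,
    inner_weightedEquiv, Pi.sub_apply, ← smul_sub, norm_smul, real_inner_smul_left,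
    Real.norm_of_nonneg (hγ _).le]
  have hinner : ∑ i, (γ i)⁻¹ * (γ i * ⟪F i u - F i u', u i - u' i⟫)
      = ∑ i, ⟪F i u - F i u', u i - u' i⟫ :=
    Finset.sum_congr rfl fun i _ => by field_simp [(hγ i).ne']
  have hnorm : ∑ i, (γ i)⁻¹ * (γ i * ‖F i u - F i u'‖) ^ 2
      ≤ c * ∑ i, ‖F i u - F i u'‖ ^ 2 := by
    rw [Finset.mul_sum]
    refine Finset.sum_le_sum fun i _ => ?_
    have : (γ i)⁻¹ * (γ i * ‖F i u - F i u'‖) ^ 2 = γ i * ‖F i u - F i u'‖ ^ 2 := by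
      field_simp [(hγ i).ne']
    rw [this]
    exact mul_le_mul_of_nonneg_right (hγc i) (sq_nonneg _)
  rw [hinner, div_mul_eq_mul_div, div_le_iff₀ hc]
  nlinarith [hF u hu u' hu']

def projGradMap (proj : ∀ i, E i → E i) (γ : ι → ℝ) (F : ∀ i, (∀ j, E j) → E i)
    (u : ∀ i, E i) : ∀ i, E i :=
  fun i => proj i (u i - γ i • F i u)

theorem tendsto_iterate_projGradMap {U : ∀ i, Set (E i)} (hUcomp : ∀ i, IsCompact (U i))
    (hUconv : ∀ i, Convex ℝ (U i)) {proj : ∀ i, E i → E i}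
    (hproj : ∀ i x, proj i x ∈ U i ∧ ∀ z ∈ U i, ‖x - proj i x‖ ≤ ‖x - z‖)
    {F : ∀ i, (∀ j, E j) → E i} {μ : ℝ} (hμ : 0 < μ)
    (hF : ∀ u ∈ univ.pi U, ∀ u' ∈ univ.pi U,
      ∑ i, ⟪F i u - F i u', u i - u' i⟫ ≥ μ * ∑ i, ‖F i u - F i u'‖ ^ 2)
    (hγ : ∀ i, 0 < γ i ∧ γ i < 2 * μ) {u₀ : ∀ i, E i} (hu₀ : u₀ ∈ univ.pi U) :
    ∃ p ∈ univ.pi U, IsFixedPt (projGradMap proj γ F) p ∧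
      Tendsto (fun k => (projGradMap proj γ F)^[k] u₀) atTop (𝓝 p) := by
  obtain ⟨c, hμc, hc, hγc⟩ := exists_ge_lt_forall_le (by linarith) fun i => (hγ i).2
  set Φ := weightedEquiv (E := E) γ fun i => (hγ i).1
  obtain ⟨κ, hκ, hT⟩ := (averagedOn_weightedEquiv_conj (fun i => (hγ i).1)
    fun i => averagedOn_one_of_forall_norm_sub_le (hUconv i) (hproj i)).comp_sub_of_cocoerciveOn
    (cocoerciveOn_weightedEquiv_conj (fun i => (hγ i).1) hμ.le (hμ.trans_le hμc) hγc hF)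
    (by rw [lt_div_iff₀ (hμ.trans_le hμc)]; linarith)
  have hconj : Φ ∘ projGradMap proj γ F ∘ Φ.symm = fun x =>
      Φ fun i => proj i (Φ.symm (x - Φ fun i => γ i • F i (Φ.symm x)) i) := by
    funext x
    simp only [comp_apply, map_sub, ContinuousLinearEquiv.symm_apply_apply]
    rfl
  rw [← hconj] at hT
  exact Φ.tendsto_iterate_of_averagedOn_conj hT hκ (isCompact_univ_pi hUcomp)
    (convex_pi fun i _ => hUconv i) (fun u _ => mem_univ_pi.2 fun i => (hproj i _).1) hu₀

end Weighted

theorem multiArea_OFO_converges_to_Nash_general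
    (N : ℕ) (n : Fin N → ℕ)
    (U : ∀ i, Set (EuclideanSpace ℝ (Fin (n i))))
    (hUcomp : ∀ i, IsCompact (U i))
    (hUconv : ∀ i, Convex ℝ (U i))
    (J : ∀ i, (∀ j, EuclideanSpace ℝ (Fin (n j))) → ℝ)
    (F : ∀ i, (∀ j, EuclideanSpace ℝ (Fin (n j))) → EuclideanSpace ℝ (Fin (n i)))
    (hJconv : ∀ (i) (u : ∀ j, EuclideanSpace ℝ (Fin (n j))),
      ConvexOn ℝ Set.univ fun v => J i (Function.update u i v))
    (hF : ∀ (i) (u : ∀ j, EuclideanSpace ℝ (Fin (n j))),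
      HasGradientAt (fun v => J i (Function.update u i v)) (F i u) (u i))
    (μ : ℝ) (hμ : 0 < μ)
    (hcoco : ∀ u u' : ∀ j, EuclideanSpace ℝ (Fin (n j)),
      (∀ i, u i ∈ U i) → (∀ i, u' i ∈ U i) →
      ∑ i, ⟪F i u - F i u', u i - u' i⟫ ≥ μ * ∑ i, ‖F i u - F i u'‖ ^ 2)
    (γ : Fin N → ℝ) (hγ : ∀ i, 0 < γ i ∧ γ i < 2 * μ)
    (proj : ∀ i, EuclideanSpace ℝ (Fin (n i)) → EuclideanSpace ℝ (Fin (n i)))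
    (hproj : ∀ i x, proj i x ∈ U i ∧ ∀ z ∈ U i, ‖x - proj i x‖ ≤ ‖x - z‖)
    (seq : ℕ → ∀ j, EuclideanSpace ℝ (Fin (n j)))
    (hseq0 : ∀ i, seq 0 i ∈ U i)
    (hstep : ∀ k i, seq (k + 1) i = proj i (seq k i - γ i • F i (seq k))) :
    ∃ ustar : ∀ j, EuclideanSpace ℝ (Fin (n j)),
      (∀ i, ustar i ∈ U i) ∧
      Tendsto seq atTop (𝓝 ustar) ∧
      ∀ i, ∀ v ∈ U i, J i ustar ≤ J i (Function.update ustar i v) := by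
  have hseq : ∀ k, seq k = (projGradMap proj γ F)^[k] (seq 0) := by
    intro k
    induction k with
    | zero => rfl
    | succ k ih => rw [iterate_succ_apply', ← ih]; exact funext (hstep k)
  obtain ⟨p, hp, hfix, hlim⟩ := tendsto_iterate_projGradMap hUcomp hUconv hproj hμ
    (fun u hu u' hu' => hcoco u u' (mem_univ_pi.1 hu) (mem_univ_pi.1 hu')) hγ
    (mem_univ_pi.2 hseq0)
  refine ⟨p, mem_univ_pi.1 hp, by simpa only [← hseq] using hlim, fun i v hv => ?_⟩
  have hmin := isMinOn_of_proj_sub_smul_eq_self (hUconv i) (hproj i)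
    ((hJconv i p).subset (subset_univ _) (hUconv i)) (hF i p) (hγ i).1 (congrFun hfix i)
  simpa using hmin hv

/-- Convergence of multi-area projected pseudo-gradient (OFO) dynamics to a Nash
equilibrium, for a game with nonempty compact convex strategy sets, player-wise
convex differentiable costs, a `μ`-cocoercive pseudo-gradient, and gains
`γ i ∈ (0, 2μ)`.  The projection `proj i` onto `U i` is characterized as the
distance minimizer. -/
theorem multiArea_OFO_converges_to_Nash
    (N : ℕ) (n : Fin N → ℕ)
    (U : ∀ i, Set (EuclideanSpace ℝ (Fin (n i))))
    (hUne : ∀ i, (U i).Nonempty)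
    (hUcomp : ∀ i, IsCompact (U i))
    (hUconv : ∀ i, Convex ℝ (U i))
    (J : ∀ i, (∀ j, EuclideanSpace ℝ (Fin (n j))) → ℝ)
    (F : ∀ i, (∀ j, EuclideanSpace ℝ (Fin (n j))) → EuclideanSpace ℝ (Fin (n i)))
    (hJconv : ∀ (i) (u : ∀ j, EuclideanSpace ℝ (Fin (n j))),
      ConvexOn ℝ Set.univ fun v => J i (Function.update u i v))
    (hF : ∀ (i) (u : ∀ j, EuclideanSpace ℝ (Fin (n j))),
      HasGradientAt (fun v => J i (Function.update u i v)) (F i u) (u i))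
    (μ : ℝ) (hμ : 0 < μ)
    (hcoco : ∀ u u' : ∀ j, EuclideanSpace ℝ (Fin (n j)),
      (∀ i, u i ∈ U i) → (∀ i, u' i ∈ U i) →
      ∑ i, ⟪F i u - F i u', u i - u' i⟫ ≥ μ * ∑ i, ‖F i u - F i u'‖ ^ 2)
    (γ : Fin N → ℝ) (hγ : ∀ i, 0 < γ i ∧ γ i < 2 * μ)
    (proj : ∀ i, EuclideanSpace ℝ (Fin (n i)) → EuclideanSpace ℝ (Fin (n i)))
    (hproj : ∀ i x, proj i x ∈ U i ∧ ∀ z ∈ U i, ‖x - proj i x‖ ≤ ‖x - z‖)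
    (seq : ℕ → ∀ j, EuclideanSpace ℝ (Fin (n j)))
    (hseq0 : ∀ i, seq 0 i ∈ U i)
    (hstep : ∀ k i, seq (k + 1) i = proj i (seq k i - γ i • F i (seq k))) :
    ∃ ustar : ∀ j, EuclideanSpace ℝ (Fin (n j)),
      (∀ i, ustar i ∈ U i) ∧
      Tendsto seq atTop (𝓝 ustar) ∧
      ∀ i, ∀ v ∈ U i, J i ustar ≤ J i (Function.update ustar i v) :=
  multiArea_OFO_converges_to_Nash_general N n U hUcomp hUconv J F hJconv hF μ hμ hcoco γ hγ proj
    hproj seq hseq0 hstep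
end

section
/- Let F : ℝ^n → ℝ^n be μ-cocoercive on a set U ⊆ ℝ^n for some μ > 0, and let Γ = diag(γ_1,…,γ_n) with γ_j > 0 for all j. Equip ℝ^n with the weighted inner product ⟨x, y⟩_{Γ^{-1}} = Σ_j γ_j^{-1} x_j y_j and induced norm ‖·‖_{Γ^{-1}}. Then for all u, u' ∈ U, ⟨ΓF(u) − ΓF(u'), u − u'⟩_{Γ^{-1}} ≥ (μ / max_j γ_j) ‖ΓF(u) − ΓF(u')‖²_{Γ^{-1}}. In particular, if γ_j ∈ (0, 2μ) for all j, then ΓF is (1/2)-cocoercive with respect to the inner product ⟨·,·⟩_{Γ^{-1}}. -/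
open RealInnerProductSpace

/-!
Scaling by `Γ` and weighting by `Γ⁻¹` cancel in the inner product, so the left-hand side is the
Euclidean `⟪F u - F u', u - u'⟫ ≥ μ ‖F u - F u'‖²`, while the weighted squared norm of
`Γ (F u - F u')` is `∑ γⱼ dⱼ² ≤ (maxⱼ γⱼ) ‖d‖²`. If every `γⱼ < 2μ`, then `μ / maxⱼ γⱼ > 1/2`.
-/

section DiagonalScaling

variable {ι : Type*} [Fintype ι] {γ : ι → ℝ}

theorem sum_inv_mul_scaled_sub_mul (hγ : ∀ j, γ j ≠ 0) (a b c : ι → ℝ) :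
    ∑ j, (γ j)⁻¹ * ((γ j * a j - γ j * b j) * c j) = ∑ j, (a j - b j) * c j :=
  Finset.sum_congr rfl fun j _ => by field_simp [hγ j]

theorem sum_inv_mul_scaled_sub_sq (hγ : ∀ j, γ j ≠ 0) (a b : ι → ℝ) :
    ∑ j, (γ j)⁻¹ * (γ j * a j - γ j * b j) ^ 2 = ∑ j, γ j * (a j - b j) ^ 2 :=
  Finset.sum_congr rfl fun j _ => by field_simp [hγ j]

theorem div_sup'_mul_sum_mul_sq_le {μ : ℝ} (hμ : 0 ≤ μ) (hne : (Finset.univ : Finset ι).Nonempty)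
    (hγ : ∀ j, 0 < γ j) (x : ι → ℝ) :
    μ / Finset.univ.sup' hne γ * ∑ j, γ j * x j ^ 2 ≤ μ * ∑ j, x j ^ 2 := by
  set M := Finset.univ.sup' hne γ
  have hγM : ∀ j, γ j ≤ M := fun j => Finset.le_sup' γ (Finset.mem_univ j)
  have hM : 0 < M := (hγ hne.choose).trans_le (hγM _)
  calc μ / M * ∑ j, γ j * x j ^ 2 ≤ μ / M * (M * ∑ j, x j ^ 2) := by
        gcongr
        rw [Finset.mul_sum]
        exact Finset.sum_le_sum fun j _ => by gcongr; exact hγM j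
    _ = μ * ∑ j, x j ^ 2 := by field_simp

end DiagonalScaling

theorem EuclideanSpace.real_inner_eq_sum_mul {ι : Type*} [Fintype ι] (x y : EuclideanSpace ℝ ι) :
    ⟪x, y⟫ = ∑ j, x j * y j := by
  simp only [PiLp.inner_apply, RCLike.inner_apply, conj_trivial, mul_comm]

/-- Cocoercivity of `Γ F` in the weighted inner product
`⟪x, y⟫_{Γ⁻¹} = ∑ j, γⱼ⁻¹ xⱼ yⱼ`: if `F` is `μ`-cocoercive on `U` (in the
Euclidean inner product) and `Γ = diag(γ₁,…,γₙ)` with `γⱼ > 0`, then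
`⟪ΓF(u) − ΓF(u'), u − u'⟫_{Γ⁻¹} ≥ (μ / maxⱼ γⱼ) ‖ΓF(u) − ΓF(u')‖²_{Γ⁻¹}`;
in particular, if `γⱼ ∈ (0, 2μ)` for all `j`, then `ΓF` is `(1/2)`-cocoercive
with respect to `⟪·,·⟫_{Γ⁻¹}`. -/
theorem weighted_cocoercivity_of_diagonal_scaling
    (n : ℕ) (hn : 0 < n) (U : Set (EuclideanSpace ℝ (Fin n)))
    (F : EuclideanSpace ℝ (Fin n) → EuclideanSpace ℝ (Fin n))
    (μ : ℝ) (hμ : 0 < μ)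
    (hcoco : ∀ u ∈ U, ∀ u' ∈ U, ⟪F u - F u', u - u'⟫ ≥ μ * ‖F u - F u'‖ ^ 2)
    (γ : Fin n → ℝ) (hγpos : ∀ j, 0 < γ j) :
    (∀ u ∈ U, ∀ u' ∈ U,
      ∑ j, (γ j)⁻¹ * ((γ j * F u j - γ j * F u' j) * (u j - u' j)) ≥
        (μ / Finset.univ.sup' ⟨⟨0, hn⟩, Finset.mem_univ _⟩ γ) *
          ∑ j, (γ j)⁻¹ * (γ j * F u j - γ j * F u' j) ^ 2) ∧
    ((∀ j, γ j < 2 * μ) → ∀ u ∈ U, ∀ u' ∈ U,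
      ∑ j, (γ j)⁻¹ * ((γ j * F u j - γ j * F u' j) * (u j - u' j)) ≥
        (1 / 2) * ∑ j, (γ j)⁻¹ * (γ j * F u j - γ j * F u' j) ^ 2) := by
  have hγ : ∀ j, γ j ≠ 0 := fun j => (hγpos j).ne'
  have main : ∀ u ∈ U, ∀ u' ∈ U,
      ∑ j, (γ j)⁻¹ * ((γ j * F u j - γ j * F u' j) * (u j - u' j)) ≥
        (μ / Finset.univ.sup' ⟨⟨0, hn⟩, Finset.mem_univ _⟩ γ) *
          ∑ j, (γ j)⁻¹ * (γ j * F u j - γ j * F u' j) ^ 2 := by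
    intro u hu u' hu'
    have hcoord := hcoco u hu u' hu'
    rw [EuclideanSpace.real_inner_eq_sum_mul, EuclideanSpace.real_norm_sq_eq] at hcoord
    rw [sum_inv_mul_scaled_sub_mul hγ, sum_inv_mul_scaled_sub_sq hγ]
    exact (div_sup'_mul_sum_mul_sq_le hμ.le _ hγpos _).trans hcoord
  refine ⟨main, fun hlt u hu u' hu' => le_trans ?_ (main u hu u' hu')⟩
  obtain ⟨k, -, hk⟩ := Finset.exists_mem_eq_sup' ⟨⟨0, hn⟩, Finset.mem_univ _⟩ γ
  have hhalf : 1 / 2 ≤ μ / Finset.univ.sup' ⟨⟨0, hn⟩, Finset.mem_univ _⟩ γ := by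
    rw [hk, le_div_iff₀ (hγpos k)]
    linarith [hlt k]
  gcongr
  exact Finset.sum_nonneg fun j _ => mul_nonneg (inv_nonneg.2 (hγpos j).le) (sq_nonneg _)
end

section
/- Let U ⊆ ℝ^n be a nonempty, closed, convex set, let F : ℝ^n → ℝ^n be μ-cocoercive on ℝ^n for some μ > 0, and let γ ∈ (0, 2μ]. Define the iteration u^{k+1} = proj_U(u^k − γF(u^k)) from any u^0 ∈ U. Then for every solution u* of the variational inequality ⟨F(u*), v − u*⟩ ≥ 0 for all v ∈ U, the sequence of distances is nonincreasing: ‖u^{k+1} − u*‖ ≤ ‖u^k − u*‖ for every k (Fejér monotonicity of the projected iteration with respect to the solution set). -/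
open RealInnerProductSpace

/-- Fejér monotonicity of the projected gradient iteration
`u^{k+1} = proj_U(u^k − γ F(u^k))` with `F` `μ`-cocoercive on `ℝⁿ` and
`γ ∈ (0, 2μ]`: the distance to any solution `u*` of the variational inequality
`⟪F(u*), v − u*⟫ ≥ 0` (for all `v ∈ U`) is nonincreasing along the iterates.
The projection is characterized as the distance minimizer. -/
theorem projected_iteration_Fejer_monotone
    (n : ℕ) (U : Set (EuclideanSpace ℝ (Fin n)))
    (hUne : U.Nonempty) (hUclosed : IsClosed U) (hUconv : Convex ℝ U)
    (F : EuclideanSpace ℝ (Fin n) → EuclideanSpace ℝ (Fin n))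
    (μ : ℝ) (hμ : 0 < μ)
    (hcoco : ∀ u u' : EuclideanSpace ℝ (Fin n),
      ⟪F u - F u', u - u'⟫ ≥ μ * ‖F u - F u'‖ ^ 2)
    (γ : ℝ) (hγ0 : 0 < γ) (hγ2 : γ ≤ 2 * μ)
    (proj : EuclideanSpace ℝ (Fin n) → EuclideanSpace ℝ (Fin n))
    (hproj : ∀ x, proj x ∈ U ∧ ∀ z ∈ U, ‖x - proj x‖ ≤ ‖x - z‖)
    (seq : ℕ → EuclideanSpace ℝ (Fin n))
    (hseq0 : seq 0 ∈ U)
    (hstep : ∀ k, seq (k + 1) = proj (seq k - γ • F (seq k)))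
    (ustar : EuclideanSpace ℝ (Fin n)) (hustar : ustar ∈ U)
    (hVI : ∀ v ∈ U, ⟪F ustar, v - ustar⟫ ≥ 0) :
    ∀ k, ‖seq (k + 1) - ustar‖ ≤ ‖seq k - ustar‖ := by
  intro k
  set u := seq k
  set x := u - γ • F u with hx
  have hstepk := hstep k
  set p := proj x with hp
  have hpU : p ∈ U := (hproj x).1
  -- variational characterization of the projection
  have hvar : ∀ z ∈ U, ⟪x - p, z - p⟫ ≤ 0 := by
    have hmin : ‖x - p‖ = ⨅ w : U, ‖x - w‖ := by
      have : Nonempty U := hUne.to_subtype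
      apply le_antisymm
      · exact le_ciInf fun w => (hproj x).2 w w.2
      · exact ciInf_le ⟨0, fun a ⟨w, hw⟩ => hw ▸ norm_nonneg _⟩ (⟨p, hpU⟩ : U)
    exact (norm_eq_iInf_iff_real_inner_le_zero hUconv hpU).1 hmin
  -- cocoercivity step bound
  have key : ‖x - (ustar - γ • F ustar)‖ ≤ ‖u - ustar‖ := by
    have h1 : x - (ustar - γ • F ustar) = (u - ustar) - γ • (F u - F ustar) := by
      rw [hx]; module
    have hc := hcoco u ustar
    have hsq : ‖(u - ustar) - γ • (F u - F ustar)‖ ^ 2 ≤ ‖u - ustar‖ ^ 2 := by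
      rw [norm_sub_sq_real, real_inner_smul_right, norm_smul, real_inner_comm]
      have hn : ‖γ‖ = γ := abs_of_pos hγ0
      rw [hn, mul_pow]
      nlinarith [sq_nonneg (‖F u - F ustar‖), mul_le_mul_of_nonneg_left hγ2 hγ0.le]
    rw [h1]
    nlinarith [norm_nonneg ((u - ustar) - γ • (F u - F ustar)), norm_nonneg (u - ustar)]
  -- combine
  have h2 : ‖p - ustar‖ ^ 2 ≤ ‖u - ustar‖ * ‖p - ustar‖ := by
    have e1 : ‖p - ustar‖ ^ 2 = ⟪p - x, p - ustar⟫ + ⟪x - ustar, p - ustar⟫ := by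
      rw [← inner_add_left]; rw [show p - x + (x - ustar) = p - ustar by abel]
      exact (real_inner_self_eq_norm_sq _).symm
    have e2 : ⟪p - x, p - ustar⟫ ≤ 0 := by
      have := hvar ustar hustar
      have : ⟪x - p, ustar - p⟫ ≤ 0 := this
      have h' : ⟪p - x, p - ustar⟫ = ⟪x - p, ustar - p⟫ := by
        rw [show p - x = -(x - p) by abel, show p - ustar = -(ustar - p) by abel,
          inner_neg_neg]
      linarith [h' ▸ this]
    have e3 : ⟪x - ustar, p - ustar⟫
        = ⟪x - (ustar - γ • F ustar), p - ustar⟫ - γ * ⟪F ustar, p - ustar⟫ := by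
      rw [show x - ustar = (x - (ustar - γ • F ustar)) + (-γ) • F ustar by module,
        inner_add_left, real_inner_smul_left]
      ring
    have e4 : γ * ⟪F ustar, p - ustar⟫ ≥ 0 :=
      mul_nonneg hγ0.le (hVI p hpU)
    have e5 : ⟪x - (ustar - γ • F ustar), p - ustar⟫ ≤ ‖u - ustar‖ * ‖p - ustar‖ :=
      le_trans (real_inner_le_norm _ _) (mul_le_mul_of_nonneg_right key (norm_nonneg _))
    linarith [e1, e2, e3 ▸ (by linarith [e4, e5] :
      ⟪x - (ustar - γ • F ustar), p - ustar⟫ - γ * ⟪F ustar, p - ustar⟫ ≤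
        ‖u - ustar‖ * ‖p - ustar‖)]
  have : ‖p - ustar‖ ≤ ‖u - ustar‖ := by
    nlinarith [norm_nonneg (p - ustar), norm_nonneg (u - ustar)]
  rw [hstepk]
  exact this
end
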